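/- Let a > 0, b > 0. For all t > 0 and x > 0, with r(t,x,y) = (x/(y t)) · ((b + a y²)/(b + a x²)) · e^{−(x+y)/t} I₂(2√(xy)/t), one has ∫_0^∞ r(t,x,y) dy = 1 − e^{−x/t} · b(t+x)/(t(b + a x²)). -/

import Mathlib

/-!
Expanding `I₂` in its power series, the integrand becomes a series of nonnegative terms
`y^k e^{-y/t} (b + a y²)`, each integrated by `∫₀^∞ y^n e^{-y/t} dy = n! t^{n+1}`, so integration
and summation commute. The integrated terms are Poisson weights `e^{-u} u^n / n!` with `u = x/t`:
the `a`-part sums them over all `n`, giving `a x²`, and the `b`-part over `n ≥ 2`, giving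
`b (1 - e^{-u} (1 + u))`.
-/

open Real MeasureTheory

/-- The modified Bessel function of the first kind,
`I_ν(z) = ∑_{k=0}^∞ (z/2)^{2k+ν} / (k! Γ(k+ν+1))`. -/
noncomputable def besselI (ν z : ℝ) : ℝ :=
  ∑' k : ℕ, (z / 2) ^ (2 * (k : ℝ) + ν) / ((Nat.factorial k : ℝ) * Real.Gamma ((k : ℝ) + ν + 1))

open Set
open scoped Nat

theorem integral_tsum_of_nonneg {α ι : Type*} [MeasurableSpace α] [Countable ι] {μ : Measure α}
    {F : ι → α → ℝ} {S : ℝ} (hF_int : ∀ i, Integrable (F i) μ) (hF_nonneg : ∀ i, 0 ≤ᵐ[μ] F i)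
    (hS : HasSum (fun i ↦ ∫ a, F i a ∂μ) S) :
    ∫ a, ∑' i, F i a ∂μ = S := by
  have h_norm : (fun i ↦ ∫ a, ‖F i a‖ ∂μ) = fun i ↦ ∫ a, F i a ∂μ := funext fun i ↦
    integral_congr_ae <| (hF_nonneg i).mono fun _ ha ↦ Real.norm_of_nonneg ha
  exact (hS.unique (hasSum_integral_of_summable_integral_norm hF_int (h_norm ▸ hS.summable))).symm

theorem hasSum_exp_neg_mul_pow_div_factorial (u : ℝ) :
    HasSum (fun n : ℕ ↦ exp (-u) * (u ^ n / n !)) 1 := by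
  have h := (exp_eq_exp_ℝ ▸ NormedSpace.expSeries_div_hasSum_exp u).mul_left (exp (-u))
  rwa [← exp_add, neg_add_cancel, exp_zero] at h

theorem hasSum_exp_neg_mul_pow_add_two_div_factorial (u : ℝ) :
    HasSum (fun n : ℕ ↦ exp (-u) * (u ^ (n + 2) / (n + 2)!)) (1 - exp (-u) * (1 + u)) := by
  have h := (hasSum_nat_add_iff' 2).mpr (hasSum_exp_neg_mul_pow_div_factorial u)
  simpa [Finset.sum_range_succ, mul_add] using h

theorem besselI_natCast (n : ℕ) (z : ℝ) :
    besselI n z = ∑' k : ℕ, (z / 2) ^ (2 * k + n) / (k ! * (k + n)!) := by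
  unfold besselI
  congr 1 with k
  rw [show (k : ℝ) + n + 1 = ((k + n : ℕ) : ℝ) + 1 by push_cast; ring, Gamma_nat_eq_factorial,
    show 2 * (k : ℝ) + n = ((2 * k + n : ℕ) : ℝ) by push_cast; ring, rpow_natCast]

theorem integrableOn_pow_mul_exp_neg_div_Ioi (n : ℕ) {t : ℝ} (ht : 0 < t) :
    IntegrableOn (fun y : ℝ ↦ y ^ n * exp (-y / t)) (Ioi 0) := by
  refine (integrableOn_rpow_mul_exp_neg_mul_rpow (p := 1) (s := n) (b := t⁻¹)
    (by linarith [n.cast_nonneg (α := ℝ)]) one_pos (inv_pos.mpr ht)).congr_fun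
    (fun y _ ↦ ?_) measurableSet_Ioi
  simp only [rpow_one, rpow_natCast, div_eq_inv_mul, neg_mul, mul_neg]

theorem integral_pow_mul_exp_neg_div_Ioi (n : ℕ) {t : ℝ} (ht : 0 < t) :
    ∫ y in Ioi (0 : ℝ), y ^ n * exp (-y / t) = n ! * t ^ (n + 1) := by
  have h := integral_rpow_mul_exp_neg_mul_Ioi (a := n + 1) (by positivity) (inv_pos.mpr ht)
  rw [one_div, inv_inv, add_sub_cancel_right, ← Nat.cast_add_one, rpow_natCast,
    Nat.cast_add_one, Gamma_nat_eq_factorial] at h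
  rw [mul_comm, ← h]
  refine setIntegral_congr_fun measurableSet_Ioi fun y _ ↦ ?_
  simp only [rpow_natCast, div_eq_inv_mul, mul_neg]

theorem integrableOn_pow_mul_exp_neg_div_mul_quadratic (k : ℕ) (a b : ℝ) {t : ℝ} (ht : 0 < t) :
    IntegrableOn (fun y : ℝ ↦ y ^ k * exp (-y / t) * (b + a * y ^ 2)) (Ioi 0) :=
  IntegrableOn.congr_fun (((integrableOn_pow_mul_exp_neg_div_Ioi k ht).const_mul b).add
    ((integrableOn_pow_mul_exp_neg_div_Ioi (k + 2) ht).const_mul a))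
    (fun y _ ↦ by simp only [Pi.add_apply]; ring) measurableSet_Ioi

theorem integral_pow_mul_exp_neg_div_mul_quadratic (k : ℕ) (a b : ℝ) {t : ℝ} (ht : 0 < t) :
    ∫ y in Ioi (0 : ℝ), y ^ k * exp (-y / t) * (b + a * y ^ 2) =
      b * (k ! * t ^ (k + 1)) + a * ((k + 2)! * t ^ (k + 3)) := by
  calc ∫ y in Ioi (0 : ℝ), y ^ k * exp (-y / t) * (b + a * y ^ 2)
      = ∫ y in Ioi (0 : ℝ), b * (y ^ k * exp (-y / t)) + a * (y ^ (k + 2) * exp (-y / t)) :=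
        setIntegral_congr_fun measurableSet_Ioi fun y _ ↦ by ring
    _ = b * (k ! * t ^ (k + 1)) + a * ((k + 2)! * t ^ (k + 3)) := by
        rw [integral_add ((integrableOn_pow_mul_exp_neg_div_Ioi k ht).const_mul b)
            ((integrableOn_pow_mul_exp_neg_div_Ioi (k + 2) ht).const_mul a),
          integral_const_mul, integral_const_mul, integral_pow_mul_exp_neg_div_Ioi k ht,
          integral_pow_mul_exp_neg_div_Ioi (k + 2) ht]

/-- `r(t,x,y) = besselKernel t x y * (b + a y²) / (b + a x²)`. -/
noncomputable def besselKernel (t x y : ℝ) : ℝ :=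
  x / (y * t) * exp (-(x + y) / t) * besselI 2 (2 * √(x * y) / t)

noncomputable def besselKernelCoeff (t x : ℝ) (k : ℕ) : ℝ :=
  exp (-x / t) * x ^ (k + 2) / (t ^ (2 * k + 3) * (k ! * (k + 2)!))

theorem besselKernel_eq_tsum {t x y : ℝ} (hx : 0 ≤ x) (hy : 0 < y) (ht : 0 < t) :
    besselKernel t x y = ∑' k : ℕ, besselKernelCoeff t x k * (y ^ k * exp (-y / t)) := by
  have hI : besselI 2 (2 * √(x * y) / t) =
      ∑' k : ℕ, (x * y) ^ (k + 1) / (t ^ (2 * k + 2) * (k ! * (k + 2)!)) := by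
    have h := besselI_natCast 2 (2 * √(x * y) / t)
    rw [Nat.cast_ofNat] at h
    rw [h]
    congr 1 with k
    rw [show 2 * √(x * y) / t / 2 = √(x * y) / t by ring, div_pow,
      show 2 * k + 2 = 2 * (k + 1) by ring, pow_mul, sq_sqrt (by positivity), pow_mul]
    ring
  have hexp : exp (-(x + y) / t) = exp (-x / t) * exp (-y / t) := by
    rw [← exp_add]; ring_nf
  rw [besselKernel, hI, hexp, ← tsum_mul_left]
  congr 1 with k
  rw [besselKernelCoeff]
  field_simp
  ring

theorem integral_besselKernelCoeff_mul_quadratic (k : ℕ) (a b x : ℝ) {t : ℝ} (ht : 0 < t) :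
    ∫ y in Ioi (0 : ℝ), besselKernelCoeff t x k * (y ^ k * exp (-y / t) * (b + a * y ^ 2)) =
      b * (exp (-(x / t)) * ((x / t) ^ (k + 2) / (k + 2)!)) +
        a * x ^ 2 * (exp (-(x / t)) * ((x / t) ^ k / k !)) := by
  rw [integral_const_mul, integral_pow_mul_exp_neg_div_mul_quadratic k a b ht, besselKernelCoeff,
    neg_div, div_pow, div_pow]
  field_simp
  ring

/-- The identity (3.19): the smooth part `r(t,x,y)` of the fundamental
solution (3.18) of `u_t = x u_xx + (3 - 4b/(b+ax²)) u_x` integrates to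
`1 - e^{-x/t} b(t+x)/(t(b+ax²))`. -/
theorem stmt_6 (a b t x : ℝ) (ha : 0 < a) (hb : 0 < b) (ht : 0 < t) (hx : 0 < x)
    (r : ℝ → ℝ)
    (hr : ∀ y, r y = (x / (y * t)) * ((b + a * y ^ 2) / (b + a * x ^ 2))
        * Real.exp (-(x + y) / t) * besselI 2 (2 * Real.sqrt (x * y) / t)) :
    (∫ y in Set.Ioi (0 : ℝ), r y)
      = 1 - Real.exp (-x / t) * (b * (t + x) / (t * (b + a * x ^ 2))) := by
  have hc : 0 < b + a * x ^ 2 := by positivity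
  set F : ℕ → ℝ → ℝ := fun k y ↦
    besselKernelCoeff t x k * (y ^ k * exp (-y / t) * (b + a * y ^ 2)) / (b + a * x ^ 2)
  have hr_eq : ∀ y ∈ Ioi 0, r y = ∑' k, F k y := fun y hy ↦ by
    have hF : ∀ k, F k y = besselKernelCoeff t x k * (y ^ k * exp (-y / t)) *
        ((b + a * y ^ 2) / (b + a * x ^ 2)) := fun k ↦ by
      simp only [F]
      ring
    rw [tsum_congr hF, tsum_mul_right, ← besselKernel_eq_tsum hx.le hy ht, hr, besselKernel]
    ring
  rw [setIntegral_congr_fun measurableSet_Ioi hr_eq]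
  refine integral_tsum_of_nonneg (fun k ↦ ?_) (fun k ↦ ?_) ?_
  · exact ((integrableOn_pow_mul_exp_neg_div_mul_quadratic k a b ht).const_mul _).div_const _
  · refine ae_restrict_of_forall_mem measurableSet_Ioi fun y (hy : 0 < y) ↦ ?_
    simp only [F, besselKernelCoeff, Pi.zero_apply]
    positivity
  · have h_total : (b * (1 - exp (-(x / t)) * (1 + x / t)) + a * x ^ 2 * 1) / (b + a * x ^ 2) =
        1 - exp (-x / t) * (b * (t + x) / (t * (b + a * x ^ 2))) := by
      rw [neg_div]
      field_simp
      ring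
    rw [← h_total]
    refine (((hasSum_exp_neg_mul_pow_add_two_div_factorial (x / t)).mul_left b).add
      ((hasSum_exp_neg_mul_pow_div_factorial (x / t)).mul_left (a * x ^ 2))).div_const
      (b + a * x ^ 2) |>.congr_fun fun k ↦ ?_
    simp only [F, integral_div, integral_besselKernelCoeff_mul_quadratic k a b x ht]
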